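/- arXiv:2110.00539 — 3 statements merged into one kernel-verified Lean document; each statement's English description precedes it below -/
import Mathlib

section
/- If f : D → ℝ^d has L1-sensitivity Δ (i.e., for all neighboring inputs x, x' differing in one entry, ‖f(x) − f(x')‖₁ ≤ Δ), then the Laplace mechanism that outputs f(x) + (Y₁,...,Y_d) with Y_i i.i.d. Laplace with scale Δ/ε is ε-differentially private: for any neighboring x, x' and any measurable set S, Pr[f(x)+Y ∈ S] ≤ e^ε · Pr[f(x')+Y ∈ S]. -/
/-!
The Laplace density is proportional to `exp (-‖y‖₁ / b)`, so by the triangle inequality for `‖·‖₁`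
shifting its centre by `a - a'` changes it pointwise by a factor of at most `exp (‖a - a'‖₁ / b)`.
With `b = Δ / ε` and `‖f x - f x'‖₁ ≤ Δ` this factor is at most `exp ε`; integrating over `S`
gives the claim.
-/

open MeasureTheory Real

/-- The d-dimensional Laplace density with scale `b`. -/
noncomputable def lapDensity (d : ℕ) (b : ℝ) (y : Fin d → ℝ) : ℝ :=
  ∏ i, (1 / (2 * b)) * Real.exp (-|y i| / b)

lemma lapDensity_eq_pow_mul_exp (d : ℕ) (b : ℝ) (y : Fin d → ℝ) :
    lapDensity d b y = (1 / (2 * b)) ^ d * exp (-(∑ i, |y i|) / b) := by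
  rw [lapDensity, Finset.prod_mul_distrib, Finset.prod_const, Finset.card_univ, Fintype.card_fin,
    ← exp_sum, ← Finset.sum_div, ← Finset.sum_neg_distrib]

lemma lapDensity_nonneg (d : ℕ) {b : ℝ} (hb : 0 ≤ b) (y : Fin d → ℝ) : 0 ≤ lapDensity d b y :=
  Finset.prod_nonneg fun _ _ => by positivity

lemma lapDensity_le_exp_mul (d : ℕ) {b : ℝ} (hb : 0 ≤ b) (u v : Fin d → ℝ) :
    lapDensity d b u ≤ exp ((∑ i, |u i - v i|) / b) * lapDensity d b v := by
  have hnorm : -(∑ i, |u i|) ≤ (∑ i, |u i - v i|) + -(∑ i, |v i|) := by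
    rw [← sub_eq_add_neg, neg_le_sub_iff_le_add, ← Finset.sum_add_distrib]
    exact Finset.sum_le_sum fun i _ => by
      linarith [abs_sub_abs_le_abs_sub (v i) (u i), abs_sub_comm (v i) (u i)]
  rw [lapDensity_eq_pow_mul_exp, lapDensity_eq_pow_mul_exp, mul_left_comm, ← exp_add, ← add_div]
  gcongr

lemma setLIntegral_ofReal_le_ofReal_mul {α : Type*} [MeasurableSpace α] (μ : Measure α)
    (S : Set α) {p q : α → ℝ} {c : ℝ} (hc : 0 ≤ c) (hpq : ∀ y, p y ≤ c * q y) :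
    ∫⁻ y in S, ENNReal.ofReal (p y) ∂μ ≤ ENNReal.ofReal c * ∫⁻ y in S, ENNReal.ofReal (q y) ∂μ := by
  rw [← lintegral_const_mul' _ _ ENNReal.ofReal_ne_top]
  refine lintegral_mono fun y => ?_
  rw [← ENNReal.ofReal_mul hc]
  exact ENNReal.ofReal_le_ofReal (hpq y)

theorem laplace_mechanism_dp_general {D : Type*} (Neighbor : D → D → Prop)
    (d : ℕ) (f : D → (Fin d → ℝ)) (Δ ε : ℝ) (hε : 0 < ε)
    (hsens : ∀ x x', Neighbor x x' → ∑ i, |f x i - f x' i| ≤ Δ)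
    (x x' : D) (hN : Neighbor x x')
    (S : Set (Fin d → ℝ)) :
    ∫⁻ y in S, ENNReal.ofReal (lapDensity d (Δ / ε) (y - f x)) ∂volume ≤
      ENNReal.ofReal (Real.exp ε) *
        ∫⁻ y in S, ENNReal.ofReal (lapDensity d (Δ / ε) (y - f x')) ∂volume := by
  have hdist := hsens x x' hN
  have hΔ : 0 ≤ Δ := (Finset.sum_nonneg fun i _ => abs_nonneg _).trans hdist
  have hb : 0 ≤ Δ / ε := div_nonneg hΔ hε.le
  have hratio : (∑ i, |f x i - f x' i|) / (Δ / ε) ≤ ε := by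
    rw [div_div_eq_mul_div]
    exact div_le_of_le_mul₀ hΔ hε.le (by nlinarith)
  refine setLIntegral_ofReal_le_ofReal_mul volume S (exp_nonneg ε) fun y => ?_
  calc lapDensity d (Δ / ε) (y - f x)
      ≤ exp ((∑ i, |(y - f x) i - (y - f x') i|) / (Δ / ε)) * lapDensity d (Δ / ε) (y - f x') :=
        lapDensity_le_exp_mul d hb _ _
    _ = exp ((∑ i, |f x i - f x' i|) / (Δ / ε)) * lapDensity d (Δ / ε) (y - f x') := by
        simp only [Pi.sub_apply, sub_sub_sub_cancel_left, abs_sub_comm (f x' _)]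
    _ ≤ exp ε * lapDensity d (Δ / ε) (y - f x') := by
        gcongr
        exact lapDensity_nonneg d hb _

/-- The Laplace mechanism with noise scale `Δ/ε` applied to a query with
L1-sensitivity `Δ` is `ε`-differentially private. -/
theorem laplace_mechanism_dp {D : Type*} (Neighbor : D → D → Prop)
    (d : ℕ) (f : D → (Fin d → ℝ)) (Δ ε : ℝ) (hΔ : 0 < Δ) (hε : 0 < ε)
    (hsens : ∀ x x', Neighbor x x' → ∑ i, |f x i - f x' i| ≤ Δ)
    (x x' : D) (hN : Neighbor x x')
    (S : Set (Fin d → ℝ)) (hS : MeasurableSet S) :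
    ∫⁻ y in S, ENNReal.ofReal (lapDensity d (Δ / ε) (y - f x)) ∂volume ≤
      ENNReal.ofReal (Real.exp ε) *
        ∫⁻ y in S, ENNReal.ofReal (lapDensity d (Δ / ε) (y - f x')) ∂volume :=
  laplace_mechanism_dp_general Neighbor d f Δ ε hε hsens x x' hN S
end

section
/- Let f : D → ℝ^d have L2-sensitivity Δ₂ (‖f(x) − f(x')‖₂ ≤ Δ₂ for all neighboring x, x'). The mechanism that outputs f(x) + κ, where κ ∈ ℝ^d is drawn from the density p(κ) ∝ exp(−ε‖κ‖₂/Δ₂), is ε-differentially private. -/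
/-!
The density ratio of the two shifted noise distributions at `y` is
`exp (ε (‖y - f x'‖ - ‖y - f x‖) / Δ)`, and by the triangle inequality and the sensitivity bound
the exponent is at most `ε`; integrating this pointwise bound over `S` gives the claim.
-/

open MeasureTheory Real

theorem exp_neg_mul_norm_sub_div_le_exp_mul {E : Type*} [SeminormedAddCommGroup E]
    {ε Δ : ℝ} (hε : 0 ≤ ε) (hΔ : 0 < Δ) {a b : E} (hab : ‖a - b‖ ≤ Δ) (y : E) :
    exp (-(ε * ‖y - a‖) / Δ) ≤ exp ε * exp (-(ε * ‖y - b‖) / Δ) := by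
  rw [← exp_add, exp_le_exp, div_le_iff₀ hΔ, add_mul, div_mul_cancel₀ _ hΔ.ne']
  have htriangle : ‖y - b‖ ≤ ‖y - a‖ + ‖a - b‖ := norm_sub_le_norm_sub_add_norm_sub y a b
  nlinarith

theorem ENNReal.ofReal_mul_le_ofReal_mul_ofReal_mul {a b k : ℝ} (C : ℝ) (ha : 0 ≤ a)
    (hb : 0 ≤ b) (hk : 0 ≤ k) (h : a ≤ k * b) :
    ENNReal.ofReal (C * a) ≤ ENNReal.ofReal k * ENNReal.ofReal (C * b) := by
  rw [ENNReal.ofReal_mul' ha, ENNReal.ofReal_mul' hb, mul_left_comm, ← ENNReal.ofReal_mul hk]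
  gcongr

theorem exponential_mechanism_dp_general {D : Type*} (Neighbor : D → D → Prop)
    (d : ℕ) (f : D → EuclideanSpace ℝ (Fin d)) (Δ ε C : ℝ)
    (hΔ : 0 < Δ) (hε : 0 < ε)
    (hsens : ∀ x x', Neighbor x x' → ‖f x - f x'‖ ≤ Δ)
    (x x' : D) (hN : Neighbor x x')
    (S : Set (EuclideanSpace ℝ (Fin d))) :
    ∫⁻ y in S, ENNReal.ofReal (C * Real.exp (-(ε * ‖y - f x‖) / Δ)) ∂volume ≤
      ENNReal.ofReal (Real.exp ε) *
        ∫⁻ y in S, ENNReal.ofReal (C * Real.exp (-(ε * ‖y - f x'‖) / Δ)) ∂volume := by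
  rw [← lintegral_const_mul' _ _ ENNReal.ofReal_ne_top]
  refine lintegral_mono fun y => ?_
  exact ENNReal.ofReal_mul_le_ofReal_mul_ofReal_mul C (exp_pos _).le (exp_pos _).le
    (exp_pos _).le (exp_neg_mul_norm_sub_div_le_exp_mul hε.le hΔ (hsens x x' hN) y)

/-- The mechanism adding noise with density proportional to
`exp (-ε ‖κ‖₂ / Δ₂)` to a query with L2-sensitivity `Δ₂` is
`ε`-differentially private. -/
theorem exponential_mechanism_dp {D : Type*} (Neighbor : D → D → Prop)
    (d : ℕ) (f : D → EuclideanSpace ℝ (Fin d)) (Δ ε C : ℝ)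
    (hΔ : 0 < Δ) (hε : 0 < ε) (hC : 0 < C)
    (hsens : ∀ x x', Neighbor x x' → ‖f x - f x'‖ ≤ Δ)
    (x x' : D) (hN : Neighbor x x')
    (S : Set (EuclideanSpace ℝ (Fin d))) (hS : MeasurableSet S) :
    ∫⁻ y in S, ENNReal.ofReal (C * Real.exp (-(ε * ‖y - f x‖) / Δ)) ∂volume ≤
      ENNReal.ofReal (Real.exp ε) *
        ∫⁻ y in S, ENNReal.ofReal (C * Real.exp (-(ε * ‖y - f x'‖) / Δ)) ∂volume :=
  exponential_mechanism_dp_general Neighbor d f Δ ε C hΔ hε hsens x x' hN S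
end

section
/- Consider two sequences of gradient-descent iterates w_{t+1} = w_t − η ∇f_t(w_t) and w'_{t+1} = w'_t − η ∇f'_t(w'_t) started from the same point w_0 = w'_0, where at every step t the loss functions satisfy: each ∇f_t, ∇f'_t is the gradient of a convex, β-smooth function, η ≤ 2/β, each f_t and f'_t is L-Lipschitz, and f_t = f'_t for all but at most τ of the T steps. Then ‖w_T − w'_T‖ ≤ 2τLη. -/
/-!
On a step where the two losses agree, both trajectories apply the same map
`x ↦ x - η ∇f x`, which is nonexpansive when `f` is convex and `β`-smooth and `η ≤ 2 / β`:
the gradient of such a function is co-coercive (Baillon–Haddad),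
`‖∇f x - ∇f y‖² / β ≤ ⟪∇f x - ∇f y, x - y⟫`, and expanding `‖(x - y) - η (∇f x - ∇f y)‖²`
shows the cross term dominates the quadratic one. On each of the at most `τ` steps where the
losses differ, the distance grows by at most `‖η ∇f_t‖ + ‖η ∇f'_t‖ ≤ 2 L η`.
-/

open Set AffineMap
open scoped RealInnerProductSpace NNReal

theorem le_add_sum_of_forall_lt_le_add {α : Type*} [AddCommGroup α] [PartialOrder α]
    [IsOrderedAddMonoid α] {a b : ℕ → α} {T : ℕ} (h : ∀ t < T, a (t + 1) ≤ a t + b t) :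
    a T ≤ a 0 + ∑ t ∈ Finset.range T, b t := by
  have := Finset.sum_le_sum fun t ht => sub_le_iff_le_add'.2 (h t (Finset.mem_range.1 ht))
  rw [Finset.sum_range_sub] at this
  exact sub_le_iff_le_add'.1 this

noncomputable section

variable {E : Type*} [NormedAddCommGroup E] [InnerProductSpace ℝ E] [CompleteSpace E]
  {f : E → ℝ} {β : ℝ≥0}

def gradientStep (η : ℝ) (f : E → ℝ) (x : E) : E := x - η • gradient f x

theorem HasGradientAt.hasDerivAt_comp_lineMap {g x y : E} {t : ℝ}
    (hf : HasGradientAt f g (lineMap x y t)) :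
    HasDerivAt (fun s => f (lineMap x y s)) ⟪g, y - x⟫ t := by
  have := hf.hasFDerivAt.comp_hasDerivAt t hasDerivAt_lineMap
  simp only [InnerProductSpace.toDual_apply_apply] at this
  exact this

theorem ConvexOn.add_inner_gradient_le (hconv : ConvexOn ℝ univ f) {x : E}
    (hx : DifferentiableAt ℝ f x) (y : E) : f x + ⟪gradient f x, y - x⟫ ≤ f y := by
  have hline : ConvexOn ℝ univ (fun s : ℝ => f (lineMap x y s)) := by
    have := hconv.comp_affineMap (lineMap x y)
    rw [preimage_univ] at this
    exact this
  have hgrad : HasGradientAt f (gradient f x) (lineMap x y (0 : ℝ)) := by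
    rw [lineMap_apply_zero]
    exact hx.hasGradientAt
  have := hline.le_slope_of_hasDerivAt (mem_univ 0) (mem_univ 1) one_pos
    hgrad.hasDerivAt_comp_lineMap
  simp only [slope_def_field, lineMap_apply_zero, lineMap_apply_one, sub_zero, div_one] at this
  linarith

theorem le_add_inner_gradient_add_of_lipschitzWith_gradient (hf : Differentiable ℝ f)
    (hβ : LipschitzWith β (gradient f)) (x y : E) :
    f y ≤ f x + ⟪gradient f x, y - x⟫ + β / 2 * ‖y - x‖ ^ 2 := by
  set ψ : ℝ → ℝ := fun t =>
    f (lineMap x y t) - t * ⟪gradient f x, y - x⟫ - β / 2 * t ^ 2 * ‖y - x‖ ^ 2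
  have hψ : ∀ t, HasDerivAt ψ
      (⟪gradient f (lineMap x y t) - gradient f x, y - x⟫ - β * t * ‖y - x‖ ^ 2) t := by
    intro t
    have := (((hf (lineMap x y t)).hasGradientAt.hasDerivAt_comp_lineMap).sub
      ((hasDerivAt_id t).mul_const ⟪gradient f x, y - x⟫)).sub
      (((hasDerivAt_pow 2 t).const_mul ((β : ℝ) / 2)).mul_const (‖y - x‖ ^ 2))
    refine this.congr_deriv ?_
    rw [inner_sub_left]
    simp only [Nat.cast_ofNat]
    ring
  have hanti : AntitoneOn ψ (Ici 0) := by
    refine antitoneOn_of_hasDerivWithinAt_nonpos (convex_Ici 0)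
      (fun t _ => (hψ t).continuousAt.continuousWithinAt) (fun t _ => (hψ t).hasDerivWithinAt) ?_
    intro t ht
    rw [interior_Ici] at ht
    have hlip : ‖gradient f (lineMap x y t) - gradient f x‖ ≤ β * (t * ‖y - x‖) := by
      calc _ ≤ β * ‖lineMap x y t - x‖ := hβ.norm_sub_le _ _
        _ = β * (t * ‖y - x‖) := by
          rw [← dist_eq_norm, dist_lineMap_left, Real.norm_of_nonneg ht.le, dist_eq_norm']
    nlinarith [real_inner_le_norm (gradient f (lineMap x y t) - gradient f x) (y - x),
      norm_nonneg (y - x)]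
  have := hanti self_mem_Ici (mem_Ici.2 zero_le_one) zero_le_one
  simp only [ψ, lineMap_apply_zero, lineMap_apply_one] at this
  linarith

theorem ConvexOn.add_inner_gradient_add_sq_norm_div_le (hconv : ConvexOn ℝ univ f)
    (hf : Differentiable ℝ f) (hβ : LipschitzWith β (gradient f)) (x y : E) :
    f x + ⟪gradient f x, y - x⟫ + ‖gradient f y - gradient f x‖ ^ 2 / (2 * β) ≤ f y := by
  set D := gradient f y - gradient f x
  set z := y - (β : ℝ)⁻¹ • D
  have hdescent := le_add_inner_gradient_add_of_lipschitzWith_gradient hf hβ y z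
  have hsupport := hconv.add_inner_gradient_le (hf x) z
  have hzy : z - y = -((β : ℝ)⁻¹ • D) := by simp [z]
  have hzx : z - x = (y - x) - (β : ℝ)⁻¹ • D := by simp only [z]; abel
  rw [hzy, inner_neg_right, inner_smul_right, norm_neg, norm_smul, Real.norm_eq_abs,
    abs_of_nonneg (by positivity)] at hdescent
  rw [hzx, inner_sub_right, inner_smul_right] at hsupport
  have hD : (β : ℝ)⁻¹ * ⟪gradient f y, D⟫ - (β : ℝ)⁻¹ * ⟪gradient f x, D⟫ = ‖D‖ ^ 2 / β := by
    rw [← mul_sub, ← inner_sub_left, real_inner_self_eq_norm_sq, div_eq_inv_mul]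
  have hcoef : (β : ℝ) / 2 * ((β : ℝ)⁻¹ * ‖D‖) ^ 2 = ‖D‖ ^ 2 / β - ‖D‖ ^ 2 / (2 * β) := by
    rcases eq_or_ne (β : ℝ) 0 with h0 | h0
    · simp [h0]
    · field_simp
      ring
  linarith

theorem ConvexOn.sq_norm_gradient_sub_div_le_inner (hconv : ConvexOn ℝ univ f)
    (hf : Differentiable ℝ f) (hβ : LipschitzWith β (gradient f)) (x y : E) :
    ‖gradient f x - gradient f y‖ ^ 2 / β ≤ ⟪gradient f x - gradient f y, x - y⟫ := by
  have hxy := hconv.add_inner_gradient_add_sq_norm_div_le hf hβ x y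
  have hyx := hconv.add_inner_gradient_add_sq_norm_div_le hf hβ y x
  rw [norm_sub_rev] at hxy
  have hsum : ⟪gradient f x - gradient f y, x - y⟫
      = -(⟪gradient f x, y - x⟫ + ⟪gradient f y, x - y⟫) := by
    rw [inner_sub_left, ← neg_sub x y, inner_neg_right]
    ring
  have hcoef : ‖gradient f x - gradient f y‖ ^ 2 / β
      = 2 * (‖gradient f x - gradient f y‖ ^ 2 / (2 * β)) := by
    rw [mul_div_assoc', mul_div_mul_left _ _ two_ne_zero]
  rw [hsum, hcoef]
  linarith

theorem ConvexOn.lipschitzWith_gradientStep (hconv : ConvexOn ℝ univ f)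
    (hf : Differentiable ℝ f) (hβ : LipschitzWith β (gradient f)) {η : ℝ}
    (hη0 : 0 ≤ η) (hηβ : η ≤ 2 / β) : LipschitzWith 1 (gradientStep η f) := by
  refine LipschitzWith.of_dist_le_mul fun x y => ?_
  rw [NNReal.coe_one, one_mul, dist_eq_norm, dist_eq_norm]
  set D := gradient f x - gradient f y
  have hsplit : gradientStep η f x - gradientStep η f y = (x - y) - η • D := by
    simp only [gradientStep, D, smul_sub]
    abel
  have hcoco := hconv.sq_norm_gradient_sub_div_le_inner hf hβ x y
  have hquad : η ^ 2 * ‖D‖ ^ 2 ≤ 2 * η * ⟪x - y, D⟫ :=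
    calc η ^ 2 * ‖D‖ ^ 2 = η * (η * ‖D‖ ^ 2) := by ring
      _ ≤ η * (2 / β * ‖D‖ ^ 2) := by gcongr
      _ = 2 * η * (‖D‖ ^ 2 / β) := by ring
      _ ≤ 2 * η * ⟪x - y, D⟫ := by
        rw [real_inner_comm]
        gcongr
  rw [hsplit, ← pow_le_pow_iff_left₀ (norm_nonneg _) (norm_nonneg _) two_ne_zero,
    norm_sub_sq_real, inner_smul_right, norm_smul, mul_pow, Real.norm_eq_abs, sq_abs]
  linarith

theorem LipschitzWith.norm_gradient_le {L : ℝ≥0} (hf : LipschitzWith L f) (x : E) :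
    ‖gradient f x‖ ≤ L := by
  rw [gradient, LinearIsometryEquiv.norm_map]
  exact norm_fderiv_le_of_lipschitz ℝ hf

theorem norm_gradientStep_sub_gradientStep_le {g : E → ℝ} {L : ℝ≥0} (hf : LipschitzWith L f)
    (hg : LipschitzWith L g) {η : ℝ} (hη : 0 ≤ η) (x y : E) :
    ‖gradientStep η f x - gradientStep η g y‖ ≤ ‖x - y‖ + 2 * L * η := by
  have hsplit : gradientStep η f x - gradientStep η g y
      = (x - y) - (η • gradient f x - η • gradient g y) := by
    simp only [gradientStep]
    abel
  have hbound : ∀ h : E → ℝ, LipschitzWith L h → ∀ z, ‖η • gradient h z‖ ≤ L * η :=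
    fun h hh z => by
      rw [norm_smul, Real.norm_of_nonneg hη, mul_comm]
      exact mul_le_mul_of_nonneg_right (hh.norm_gradient_le z) hη
  calc _ ≤ ‖x - y‖ + (‖η • gradient f x‖ + ‖η • gradient g y‖) := by
        rw [hsplit]
        exact (norm_sub_le _ _).trans (by gcongr; exact norm_sub_le _ _)
    _ ≤ ‖x - y‖ + (L * η + L * η) := by
        gcongr
        exacts [hbound f hf x, hbound g hg y]
    _ = ‖x - y‖ + 2 * L * η := by ring

end

theorem sgd_sensitivity_general (d : ℕ) (T τ : ℕ) (L β : NNReal) (η : ℝ)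
    (hη0 : 0 ≤ η) (hηβ : η ≤ 2 / (β : ℝ))
    (f f' : ℕ → EuclideanSpace ℝ (Fin d) → ℝ)
    (w w' : ℕ → EuclideanSpace ℝ (Fin d))
    (hconv : ∀ t, ConvexOn ℝ Set.univ (f t))
    (hdiff : ∀ t, Differentiable ℝ (f t))
    (hlip : ∀ t, LipschitzWith L (f t))
    (hlip' : ∀ t, LipschitzWith L (f' t))
    (hsmooth : ∀ t, LipschitzWith β (gradient (f t)))
    (hinit : w 0 = w' 0)
    (hstep : ∀ t, w (t + 1) = w t - η • gradient (f t) (w t))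
    (hstep' : ∀ t, w' (t + 1) = w' t - η • gradient (f' t) (w' t))
    (hdiffer : ∃ S : Finset ℕ, S.card ≤ τ ∧ ∀ t < T, t ∉ S → f t = f' t) :
    ‖w T - w' T‖ ≤ 2 * τ * L * η := by
  obtain ⟨S, hScard, hagree⟩ := hdiffer
  have hstep_dist : ∀ t < T,
      ‖w (t + 1) - w' (t + 1)‖ ≤ ‖w t - w' t‖ + if t ∈ S then 2 * L * η else 0 := by
    intro t ht
    rw [hstep, hstep']
    split_ifs with hS
    · exact norm_gradientStep_sub_gradientStep_le (hlip t) (hlip' t) hη0 _ _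
    · rw [add_zero, ← hagree t ht hS]
      have hnonexp := (hconv t).lipschitzWith_gradientStep (hdiff t) (hsmooth t) hη0 hηβ
      simpa [gradientStep] using hnonexp.norm_sub_le (w t) (w' t)
  calc ‖w T - w' T‖ ≤ ‖w 0 - w' 0‖ + ∑ t ∈ Finset.range T, if t ∈ S then 2 * L * η else 0 :=
        le_add_sum_of_forall_lt_le_add (a := fun t => ‖w t - w' t‖) hstep_dist
    _ = 2 * L * η * (Finset.range T ∩ S).card := by
        rw [hinit, sub_self, norm_zero, zero_add, Finset.sum_ite_mem, Finset.sum_const,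
          nsmul_eq_mul]
        ring
    _ ≤ 2 * L * η * τ := by
        gcongr
        exact_mod_cast (Finset.card_le_card Finset.inter_subset_right).trans hScard
    _ = 2 * τ * L * η := by ring

/-- Sensitivity of permutation-based SGD: two gradient-descent trajectories
on per-step losses that agree in all but at most `τ` of the `T` steps, each
loss being convex, `β`-smooth and `L`-Lipschitz, with step size `η ≤ 2/β`,
end up within distance `2 τ L η`. -/
theorem sgd_sensitivity (d : ℕ) (T τ : ℕ) (L β : NNReal) (η : ℝ)
    (hη0 : 0 ≤ η) (hηβ : η ≤ 2 / (β : ℝ))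
    (f f' : ℕ → EuclideanSpace ℝ (Fin d) → ℝ)
    (w w' : ℕ → EuclideanSpace ℝ (Fin d))
    (hconv : ∀ t, ConvexOn ℝ Set.univ (f t))
    (hconv' : ∀ t, ConvexOn ℝ Set.univ (f' t))
    (hdiff : ∀ t, Differentiable ℝ (f t))
    (hdiff' : ∀ t, Differentiable ℝ (f' t))
    (hlip : ∀ t, LipschitzWith L (f t))
    (hlip' : ∀ t, LipschitzWith L (f' t))
    (hsmooth : ∀ t, LipschitzWith β (gradient (f t)))
    (hsmooth' : ∀ t, LipschitzWith β (gradient (f' t)))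
    (hinit : w 0 = w' 0)
    (hstep : ∀ t, w (t + 1) = w t - η • gradient (f t) (w t))
    (hstep' : ∀ t, w' (t + 1) = w' t - η • gradient (f' t) (w' t))
    (hdiffer : ∃ S : Finset ℕ, S.card ≤ τ ∧ ∀ t < T, t ∉ S → f t = f' t) :
    ‖w T - w' T‖ ≤ 2 * τ * L * η :=
  sgd_sensitivity_general d T τ L β η hη0 hηβ f f' w w' hconv hdiff hlip hlip' hsmooth hinit hstep
    hstep' hdiffer
end
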